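/- For the Static Black-Peg AB Game with 3 pegs and c ≥ 5 colors: a feasible strategy cannot contain two (1,1,⋆)-questions Q, Q' that are disjoint in the first two pegs, i.e., with {Q 0, Q 1} ∩ {Q' 0, Q' 1} = ∅. -/

import Mathlib

/-- The answer of a question `Q` to a secret `S`: the number of pegs where they agree. -/
def answer {p c : ℕ} (Q S : Fin p → Fin c) : ℕ :=
  (Finset.univ.filter fun i => Q i = S i).card

/-- A strategy (a list of pairwise distinct injective codes) is feasible if the list of
answers determines every injective secret uniquely. -/
def Feasible {p c : ℕ} (qs : List (Fin p → Fin c)) : Prop :=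
  qs.Nodup ∧ (∀ Q ∈ qs, Function.Injective Q) ∧
    ∀ S S' : Fin p → Fin c, Function.Injective S → Function.Injective S' →
      qs.map (fun Q => answer Q S) = qs.map (fun Q => answer Q S') → S = S'

/-- The number of questions of the strategy `qs` having color `q` on peg `i`. -/
def occ {p c : ℕ} (qs : List (Fin p → Fin c)) (i : Fin p) (q : Fin c) : ℕ :=
  qs.countP fun Q => decide (Q i = q)

/-!
Let `Q = (a, b, _)` and `Q' = (a', b', _)` be the two questions and `z` a fifth color.
Since `a` and `b` occur on their pegs only in `Q`, a question has `a` on peg 0 exactly when it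
has `b` on peg 1, and likewise for `a'`, `b'`. Hence swapping the first two colors
between the secrets `(a, b', z)` and `(a', b, z)` changes no answer, so the strategy cannot
tell these two distinct secrets apart.
-/

open Finset

lemma answer_eq_sum {p c : ℕ} (Q S : Fin p → Fin c) :
    answer Q S = ∑ i, if Q i = S i then 1 else 0 :=
  card_filter _ _

lemma answer_eq_of_swap {p c : ℕ} {R S S' : Fin p → Fin c} {i j : Fin p} (hij : i ≠ j)
    (hi : R i = S i ↔ R j = S' j) (hj : R j = S j ↔ R i = S' i)
    (hrest : ∀ k, k ≠ i → k ≠ j → S k = S' k) :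
    answer R S = answer R S' := by
  have hsplit : ∀ T : Fin p → Fin c, answer R T =
      ((if R i = T i then 1 else 0) + if R j = T j then 1 else 0) +
        ∑ k ∈ univ \ {i, j}, if R k = T k then 1 else 0 := fun T => by
    rw [answer_eq_sum, ← sum_sdiff (subset_univ {i, j}), sum_pair hij, add_comm]
  rw [hsplit S, hsplit S', sum_congr rfl fun k hk => ?_]
  · simp only [hi, hj]
    ac_rfl
  · simp only [mem_sdiff, mem_insert, mem_singleton, not_or] at hk
    rw [hrest k hk.2.1 hk.2.2]

lemma eq_of_occ_eq_one {p c : ℕ} {qs : List (Fin p → Fin c)} {Q R : Fin p → Fin c} {i : Fin p}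
    (hocc : occ qs i (Q i) = 1) (hQ : Q ∈ qs) (hR : R ∈ qs) (hRQ : R i = Q i) : R = Q := by
  have hfilter : ∀ T ∈ qs, T i = Q i → T ∈ qs.filter fun T => decide (T i = Q i) :=
    fun T hT h => List.mem_filter.2 ⟨hT, by simpa using h⟩
  rw [occ, List.countP_eq_length_filter] at hocc
  obtain ⟨w, hw⟩ := List.length_eq_one_iff.1 hocc
  have hQw := hfilter Q hQ rfl
  have hRw := hfilter R hR hRQ
  rw [hw, List.mem_singleton] at hQw hRw
  rw [hQw, hRw]

lemma apply_eq_iff_of_occ_eq_one {p c : ℕ} {qs : List (Fin p → Fin c)} {Q R : Fin p → Fin c}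
    {i j : Fin p} (hi : occ qs i (Q i) = 1) (hj : occ qs j (Q j) = 1) (hQ : Q ∈ qs)
    (hR : R ∈ qs) : R i = Q i ↔ R j = Q j :=
  ⟨fun h => eq_of_occ_eq_one hi hQ hR h ▸ rfl, fun h => eq_of_occ_eq_one hj hQ hR h ▸ rfl⟩

lemma injective_vecCons_three {α : Type*} {x y w : α} (hxy : x ≠ y) (hxw : x ≠ w)
    (hyw : y ≠ w) : Function.Injective ![x, y, w] := by
  intro k l h
  fin_cases k <;> fin_cases l <;> simp_all [eq_comm]

lemma exists_ne_of_four_lt_card {α : Type*} [Fintype α] [DecidableEq α] (h : 4 < Fintype.card α)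
    (a b a' b' : α) : ∃ z, z ≠ a ∧ z ≠ b ∧ z ≠ a' ∧ z ≠ b' := by
  obtain ⟨z, -, hz⟩ := exists_mem_notMem_of_card_lt_card
    ((card_le_four (a := a) (b := b) (c := a') (d := b')).trans_lt (card_univ (α := α) ▸ h))
  simp only [mem_insert, mem_singleton, not_or] at hz
  exact ⟨z, hz⟩

theorem statement10 (c : ℕ) (hc : 5 ≤ c) (qs : List (Fin 3 → Fin c))
    (hqs : Feasible qs) :
    ¬ ∃ Q Q' : Fin 3 → Fin c, Q ∈ qs ∧ Q' ∈ qs ∧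
      (occ qs 0 (Q 0) = 1 ∧ occ qs 1 (Q 1) = 1) ∧
      (occ qs 0 (Q' 0) = 1 ∧ occ qs 1 (Q' 1) = 1) ∧
      ({Q 0, Q 1} ∩ {Q' 0, Q' 1} : Set (Fin c)) = ∅ := by
  rintro ⟨Q, Q', hQ, hQ', ⟨h0, h1⟩, ⟨h0', h1'⟩, hdisj⟩
  have hdisj' := Set.disjoint_iff_inter_eq_empty.2 hdisj
  simp only [Set.disjoint_insert_left, Set.disjoint_insert_right, Set.mem_insert_iff,
    Set.mem_singleton_iff, Set.disjoint_singleton, not_or] at hdisj'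
  obtain ⟨⟨ha'a, ha'b⟩, hab', -⟩ := hdisj'
  obtain ⟨z, hza, hzb, hza', hzb'⟩ :=
    exists_ne_of_four_lt_card (by rwa [Fintype.card_fin]) (Q 0) (Q 1) (Q' 0) (Q' 1)
  have hanswers : qs.map (fun R => answer R ![Q 0, Q' 1, z]) =
      qs.map (fun R => answer R ![Q' 0, Q 1, z]) :=
    List.map_congr_left fun R hR =>
      answer_eq_of_swap (i := 0) (j := 1) (by decide)
        (apply_eq_iff_of_occ_eq_one h0 h1 hQ hR)
        (apply_eq_iff_of_occ_eq_one h0' h1' hQ' hR).symm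
        (fun k hk0 hk1 => by fin_cases k <;> simp_all)
  have hSS' := hqs.2.2 _ _ (injective_vecCons_three hab' hza.symm hzb'.symm)
    (injective_vecCons_three ha'b hza'.symm hzb.symm) hanswers
  exact ha'a (congrFun hSS' 0).symm
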